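/- Let d ∈ ℕ, A, α ∈ (0,1), and let a = (a_k)_{k∈ℕ} ∈ ℓ²(ℕ) satisfy ∑_{k=1}^∞ a_k² = ‖κ^α‖²_{L²(ℝ^d)}. For x ∈ ℝ^d ∖ {0} define Q(x) := ∑_{k=1}^∞ |∇(exp(−A|·|²/2)(f_k ∗ κ^α))(x)|² + (∑_{k=1}^∞ a_k²) · |∇√(1 − exp(−A|x|²))|². Then there exists c ∈ (0,∞), depending only on d and κ, such that sup_{x ∈ ℝ^d ∖ {0}} Q(x) ≤ c α^{−d−2}. This is the L^∞-bound ‖⟨∇·ξ^{𝐚}⟩₁‖_{L^∞(ℝ^d)} ≤ c α^{−d−2} on the quadratic variation of the spatial divergence of the noise. -/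

import Mathlib

open MeasureTheory

/-- The rescaled mollifier `κ^α(x) = α^{-d} κ(x/α)`. -/
noncomputable def mollifier (d : ℕ) (κ : EuclideanSpace ℝ (Fin d) → ℝ) (α : ℝ)
    (x : EuclideanSpace ℝ (Fin d)) : ℝ :=
  α ^ (-(d:ℝ)) * κ (α⁻¹ • x)

/-- The convolution `(f_k ∗ κ)(x) = ∫ f_k(y) κ(x−y) dy`. -/
noncomputable def convBasis (d : ℕ)
    (f : HilbertBasis ℕ ℝ (Lp ℝ 2 (volume : Measure (EuclideanSpace ℝ (Fin d)))))
    (κ : EuclideanSpace ℝ (Fin d) → ℝ) (k : ℕ) (x : EuclideanSpace ℝ (Fin d)) : ℝ :=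
  ∫ y : EuclideanSpace ℝ (Fin d), (f k : EuclideanSpace ℝ (Fin d) → ℝ) y * κ (x - y)

/-- The quadratic variation `⟨∇·ξ^𝐚⟩₁(x)` of the spatial divergence of the noise. -/
noncomputable def Qvar (d : ℕ)
    (f : HilbertBasis ℕ ℝ (Lp ℝ 2 (volume : Measure (EuclideanSpace ℝ (Fin d)))))
    (κ : EuclideanSpace ℝ (Fin d) → ℝ) (A α : ℝ) (a : ℕ → ℝ)
    (x : EuclideanSpace ℝ (Fin d)) : ℝ :=
  (∑' k : ℕ, ‖gradient
      (fun z => Real.exp (-A * ‖z‖ ^ 2 / 2) * convBasis d f (mollifier d κ α) k z) x‖ ^ 2)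
    + (∑' k : ℕ, a k ^ 2) *
        ‖gradient (fun z : EuclideanSpace ℝ (Fin d) =>
          Real.sqrt (1 - Real.exp (-A * ‖z‖ ^ 2))) x‖ ^ 2

section Auxiliary

open RealInnerProductSpace

variable {d : ℕ}

lemma norm_gradient_eq (g : EuclideanSpace ℝ (Fin d) → ℝ) (x : EuclideanSpace ℝ (Fin d)) :
    ‖gradient g x‖ = ‖fderiv ℝ g x‖ := by
  rw [gradient]; exact LinearIsometryEquiv.norm_map _ _

lemma opnorm_sq_eq (L : EuclideanSpace ℝ (Fin d) →L[ℝ] ℝ) :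
    ‖L‖ ^ 2 = ∑ i : Fin d, (L (EuclideanSpace.single i 1)) ^ 2 := by
  set w := (InnerProductSpace.toDual ℝ (EuclideanSpace ℝ (Fin d))).symm L with hw
  have hLv : ∀ v, L v = ⟪w, v⟫ := by
    intro v
    exact InnerProductSpace.toDual_symm_apply.symm
  have hnorm : ‖L‖ = ‖w‖ := (LinearIsometryEquiv.norm_map _ L).symm
  have hcomp : ∀ i, w i = L (EuclideanSpace.single i 1) := by
    intro i
    rw [hLv, EuclideanSpace.inner_single_right]
    simp
  have h2 : ‖w‖ ^ 2 = ∑ i, (w i) ^ 2 := by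
    rw [EuclideanSpace.norm_eq, Real.sq_sqrt (by positivity)]
    simp [sq_abs]
  rw [hnorm, h2]
  exact Finset.sum_congr rfl fun i _ => by rw [hcomp]

lemma gauss_hasFDeriv (A : ℝ) (x : EuclideanSpace ℝ (Fin d)) :
    HasFDerivAt (fun z : EuclideanSpace ℝ (Fin d) => Real.exp (-A * ‖z‖ ^ 2 / 2))
      ((-(A * Real.exp (-A * ‖x‖ ^ 2 / 2))) • innerSL ℝ x) x := by
  have h1 : HasFDerivAt (fun z : EuclideanSpace ℝ (Fin d) => ‖z‖ ^ 2)
      (2 • (innerSL ℝ x)) x := (hasStrictFDerivAt_norm_sq x).hasFDerivAt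
  have hfun : (fun z : EuclideanSpace ℝ (Fin d) => Real.exp (-A * ‖z‖ ^ 2 / 2))
      = fun z : EuclideanSpace ℝ (Fin d) => Real.exp ((-(A/2)) * ‖z‖ ^ 2) := by
    funext z; ring_nf
  rw [hfun]
  have h2 := (h1.const_mul (-(A/2))).exp
  refine h2.congr_fderiv ?_
  ext v
  simp only [ContinuousLinearMap.coe_smul', Pi.smul_apply, ContinuousLinearMap.smul_apply,
    smul_eq_mul, nsmul_eq_mul, innerSL_apply_apply]
  ring_nf

lemma exp_sq_hasFDeriv (A : ℝ) (x : EuclideanSpace ℝ (Fin d)) :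
    HasFDerivAt (fun z : EuclideanSpace ℝ (Fin d) => 1 - Real.exp (-A * ‖z‖ ^ 2))
      ((2 * A * Real.exp (-A * ‖x‖ ^ 2)) • innerSL ℝ x) x := by
  have h1 : HasFDerivAt (fun z : EuclideanSpace ℝ (Fin d) => ‖z‖ ^ 2)
      (2 • (innerSL ℝ x)) x := (hasStrictFDerivAt_norm_sq x).hasFDerivAt
  have h2 := ((h1.const_mul (-A)).exp).const_sub 1
  refine h2.congr_fderiv ?_
  ext v
  simp only [ContinuousLinearMap.coe_smul', Pi.smul_apply, ContinuousLinearMap.smul_apply,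
    ContinuousLinearMap.neg_apply, smul_eq_mul, nsmul_eq_mul, innerSL_apply_apply]
  ring_nf

lemma sqrt_hasFDeriv (A : ℝ) (hA : 0 < A) (x : EuclideanSpace ℝ (Fin d)) (hx : x ≠ 0) :
    HasFDerivAt (fun z : EuclideanSpace ℝ (Fin d) => Real.sqrt (1 - Real.exp (-A * ‖z‖ ^ 2)))
      ((1 / (2 * Real.sqrt (1 - Real.exp (-A * ‖x‖ ^ 2)))) •
        ((2 * A * Real.exp (-A * ‖x‖ ^ 2)) • innerSL ℝ x)) x := by
  have hxn : 0 < ‖x‖ := norm_pos_iff.mpr hx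
  have hneg : -A * ‖x‖ ^ 2 < 0 := by nlinarith [mul_pos hA (pow_pos hxn 2)]
  have hpos : 0 < 1 - Real.exp (-A * ‖x‖ ^ 2) := by
    have := Real.exp_lt_one_iff.mpr hneg
    linarith
  exact (exp_sq_hasFDeriv A x).sqrt hpos.ne'

lemma sqrt_bound_aux {A nx : ℝ} (hA0 : 0 < A) (hA1 : A ≤ 1) (hnx : 0 < nx) :
    (1 / (2 * Real.sqrt (1 - Real.exp (-(A * nx ^ 2)))) *
      (2 * A * Real.exp (-(A * nx ^ 2)) * nx)) ^ 2 ≤ 1 := by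
  set t := A * nx ^ 2 with htdef
  have ht : 0 < t := by positivity
  have he : 0 < Real.exp (-t) := Real.exp_pos _
  have h1 : Real.exp (-t) < 1 := Real.exp_lt_one_iff.mpr (by linarith)
  have hu : 0 < 1 - Real.exp (-t) := by linarith
  have hs : 0 < Real.sqrt (1 - Real.exp (-t)) := Real.sqrt_pos.mpr hu
  have hsq : Real.sqrt (1 - Real.exp (-t)) ^ 2 = 1 - Real.exp (-t) := Real.sq_sqrt hu.le
  have expand : (1 / (2 * Real.sqrt (1 - Real.exp (-t))) * (2 * A * Real.exp (-t) * nx)) ^ 2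
      = (A ^ 2 * nx ^ 2 * Real.exp (-t) ^ 2) / (1 - Real.exp (-t)) := by
    rw [mul_pow, mul_pow, div_pow, mul_pow, hsq, one_pow]
    field_simp
  rw [expand, div_le_one hu]
  have h2 : (t + 1) * Real.exp (-t) ≤ 1 := by
    have h3 := Real.add_one_le_exp t
    calc (t + 1) * Real.exp (-t) ≤ Real.exp t * Real.exp (-t) := by nlinarith
    _ = 1 := by rw [← Real.exp_add]; simp
  have key : t * Real.exp (-t) ≤ 1 - Real.exp (-t) := by nlinarith
  have hAe : A * Real.exp (-t) ≤ 1 := by nlinarith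
  have heq : A ^ 2 * nx ^ 2 * Real.exp (-t) ^ 2
      = (A * Real.exp (-t)) * (t * Real.exp (-t)) := by
    rw [htdef]; ring
  rw [heq]
  nlinarith [mul_pos ht he]

lemma gauss_sq_aux {A nx : ℝ} (hA0 : 0 < A) (hA1 : A ≤ 1) (hnx : 0 ≤ nx) :
    (A * Real.exp (-A * nx ^ 2 / 2) * nx) ^ 2 ≤ 1 := by
  set t := A * nx ^ 2 with htdef
  have ht : 0 ≤ t := by positivity
  have he : 0 < Real.exp (-t) := Real.exp_pos _
  have hexp2 : Real.exp (-A * nx ^ 2 / 2) ^ 2 = Real.exp (-t) := by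
    rw [sq, ← Real.exp_add, htdef]
    ring_nf
  have h2 : (t + 1) * Real.exp (-t) ≤ 1 := by
    have h3 := Real.add_one_le_exp t
    calc (t + 1) * Real.exp (-t) ≤ Real.exp t * Real.exp (-t) := by nlinarith
    _ = 1 := by rw [← Real.exp_add]; simp
  have heq : (A * Real.exp (-A * nx ^ 2 / 2) * nx) ^ 2
      = A * (t * Real.exp (-t)) := by
    rw [mul_pow, mul_pow, hexp2, htdef]
    ring
  rw [heq]
  nlinarith [mul_nonneg ht he.le]

lemma bessel_conv
    (f : HilbertBasis ℕ ℝ (Lp ℝ 2 (volume : Measure (EuclideanSpace ℝ (Fin d)))))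
    (φ : EuclideanSpace ℝ (Fin d) → ℝ) (hφ : Continuous φ) (hφs : HasCompactSupport φ)
    (s : Finset ℕ) :
    ∑ k ∈ s, (∫ y, (f k : EuclideanSpace ℝ (Fin d) → ℝ) y * φ y) ^ 2 ≤ ∫ y, φ y ^ 2 := by
  have hmem : MemLp φ 2 (volume : Measure (EuclideanSpace ℝ (Fin d))) :=
    hφ.memLp_of_hasCompactSupport (p := 2) hφs
  set Φ := hmem.toLp φ with hΦ
  have hinner : ∀ g : Lp ℝ 2 (volume : Measure (EuclideanSpace ℝ (Fin d))),
      (inner ℝ g Φ : ℝ) = ∫ y, (g : EuclideanSpace ℝ (Fin d) → ℝ) y * φ y := by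
    intro g
    rw [MeasureTheory.L2.inner_def]
    apply integral_congr_ae
    filter_upwards [hmem.coeFn_toLp] with y hy
    rw [hy]
    simp [RCLike.inner_apply, mul_comm]
  have hb := (f.orthonormal).sum_inner_products_le (𝕜 := ℝ) (s := s) Φ
  have hnorm : ‖Φ‖ ^ 2 = ∫ y, φ y ^ 2 := by
    rw [← real_inner_self_eq_norm_sq, hinner Φ]
    apply integral_congr_ae
    filter_upwards [hmem.coeFn_toLp] with y hy
    rw [hy]; ring
  calc ∑ k ∈ s, (∫ y, (f k : EuclideanSpace ℝ (Fin d) → ℝ) y * φ y) ^ 2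
      = ∑ k ∈ s, ‖(inner ℝ (f k) Φ : ℝ)‖ ^ 2 := by
        refine Finset.sum_congr rfl fun k _ => ?_
        rw [hinner (f k), Real.norm_eq_abs, sq_abs]
    _ ≤ ‖Φ‖ ^ 2 := hb
    _ = ∫ y, φ y ^ 2 := hnorm

lemma conv_deriv
    (f : HilbertBasis ℕ ℝ (Lp ℝ 2 (volume : Measure (EuclideanSpace ℝ (Fin d)))))
    (η : EuclideanSpace ℝ (Fin d) → ℝ) (hη : ContDiff ℝ (⊤ : ℕ∞) η) (hηs : HasCompactSupport η)
    (k : ℕ) (x : EuclideanSpace ℝ (Fin d)) :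
    ∃ D : EuclideanSpace ℝ (Fin d) →L[ℝ] ℝ,
      HasFDerivAt (fun z => convBasis d f η k z) D x ∧
      ∀ v, D v = ∫ y, (f k : EuclideanSpace ℝ (Fin d) → ℝ) y * (fderiv ℝ η (x - y) v) := by
  set L := ContinuousLinearMap.mul ℝ ℝ
  have hloc : LocallyIntegrable ((f k : EuclideanSpace ℝ (Fin d) → ℝ)) volume :=
    (Lp.memLp (f k)).locallyIntegrable (by norm_num)
  have hd := hηs.hasFDerivAt_convolution_right (L := L) hloc (hη.of_le (by simp)) x
  refine ⟨convolution (⇑(f k)) (fderiv ℝ η) (L.precompR (EuclideanSpace ℝ (Fin d))) volume x,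
    ?_, ?_⟩
  · exact hd
  · intro v
    have hint : ConvolutionExistsAt (f k : EuclideanSpace ℝ (Fin d) → ℝ) (fderiv ℝ η) x
        (L.precompR (EuclideanSpace ℝ (Fin d))) volume :=
      (hηs.fderiv ℝ).convolutionExists_right _ hloc (hη.continuous_fderiv (by simp)) x
    rw [MeasureTheory.convolution_def, ContinuousLinearMap.integral_apply hint]
    rfl

lemma mollifier_smooth (κ : EuclideanSpace ℝ (Fin d) → ℝ) (hκ : ContDiff ℝ (⊤ : ℕ∞) κ) (α : ℝ) :
    ContDiff ℝ (⊤ : ℕ∞) (mollifier d κ α) := by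
  unfold mollifier
  exact contDiff_const.mul (hκ.comp (contDiff_const_smul α⁻¹))

lemma mollifier_supp (κ : EuclideanSpace ℝ (Fin d) → ℝ) (hκ : HasCompactSupport κ)
    {α : ℝ} (hα : 0 < α) : HasCompactSupport (mollifier d κ α) := by
  have h1 : HasCompactSupport (fun x : EuclideanSpace ℝ (Fin d) => κ (α⁻¹ • x)) := by
    have := hκ.comp_homeomorph (Homeomorph.smulOfNeZero (α⁻¹ : ℝ) (by positivity))
    simpa [Function.comp_def] using this
  exact h1.mul_left

lemma mollifier_fderiv (κ : EuclideanSpace ℝ (Fin d) → ℝ) (hκ : ContDiff ℝ (⊤ : ℕ∞) κ)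
    {α : ℝ} (hα : 0 < α) (z v : EuclideanSpace ℝ (Fin d)) :
    fderiv ℝ (mollifier d κ α) z v
      = α ^ (-(d:ℝ)) * α⁻¹ * fderiv ℝ κ (α⁻¹ • z) v := by
  have hin : HasFDerivAt (fun z : EuclideanSpace ℝ (Fin d) => α⁻¹ • z)
      (α⁻¹ • ContinuousLinearMap.id ℝ (EuclideanSpace ℝ (Fin d))) z :=
    (hasFDerivAt_id z).const_smul α⁻¹
  have hκd : HasFDerivAt κ (fderiv ℝ κ (α⁻¹ • z)) (α⁻¹ • z) :=
    (hκ.differentiable (by simp) (α⁻¹ • z)).hasFDerivAt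
  have hcomp := hκd.comp z hin
  have h := hcomp.const_mul (α ^ (-(d:ℝ)))
  have hh : HasFDerivAt (mollifier d κ α)
      ((α ^ (-(d:ℝ))) • ((fderiv ℝ κ (α⁻¹ • z)).comp
        (α⁻¹ • ContinuousLinearMap.id ℝ (EuclideanSpace ℝ (Fin d))))) z := h
  rw [hh.fderiv]
  simp [mul_assoc]

lemma integral_shift_scale (g : EuclideanSpace ℝ (Fin d) → ℝ) (x : EuclideanSpace ℝ (Fin d))
    {α : ℝ} (hα : 0 < α) :
    ∫ y : EuclideanSpace ℝ (Fin d), g (α⁻¹ • (x - y)) = α ^ (d:ℕ) * ∫ y, g y := by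
  rw [integral_sub_left_eq_self (fun y => g (α⁻¹ • y)) volume x]
  rw [MeasureTheory.Measure.integral_comp_inv_smul_of_nonneg volume g hα.le]
  simp [finrank_euclideanSpace_fin]

lemma rpow1 {α : ℝ} (hα : 0 < α) (d : ℕ) :
    (α ^ (-(d:ℝ))) ^ 2 * α ^ (d:ℕ) = α ^ (-(d:ℝ)) := by
  rw [← Real.rpow_natCast α d, ← Real.rpow_natCast (α ^ (-(d:ℝ))) 2, ← Real.rpow_mul hα.le,
    ← Real.rpow_add hα]
  ring_nf

lemma rpow2 {α : ℝ} (hα : 0 < α) (d : ℕ) :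
    (α ^ (-(d:ℝ))) ^ 2 * α⁻¹ ^ 2 * α ^ (d:ℕ) = α ^ (-(d:ℝ) - 2) := by
  have h : (α ^ (-(d:ℝ))) ^ 2 * α⁻¹ ^ 2 = (α ^ (-(d:ℝ)) * α⁻¹) ^ 2 := by ring
  rw [h, ← Real.rpow_neg_one α, ← Real.rpow_add hα, ← Real.rpow_natCast α d,
    ← Real.rpow_natCast (α ^ (-(d:ℝ) + -1)) 2, ← Real.rpow_mul hα.le, ← Real.rpow_add hα]
  ring_nf

lemma rpow3 {α : ℝ} (hα0 : 0 < α) (hα1 : α ≤ 1) (d : ℕ) :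
    α ^ (-(d:ℝ)) ≤ α ^ (-(d:ℝ) - 2) :=
  Real.rpow_le_rpow_of_exponent_ge hα0 hα1 (by linarith)

end Auxiliary

set_option maxHeartbeats 1000000 in
/-- The `L^∞`-bound `‖⟨∇·ξ^𝐚⟩₁‖_{L^∞(ℝ^d)} ≤ c α^{−d−2}`, with `c`
depending only on `d` and `κ`. -/
theorem stmt10 (d : ℕ)
    (f : HilbertBasis ℕ ℝ (Lp ℝ 2 (volume : Measure (EuclideanSpace ℝ (Fin d)))))
    (κ : EuclideanSpace ℝ (Fin d) → ℝ)
    (hκsmooth : ContDiff ℝ (⊤ : ℕ∞) κ) (hκsupp : HasCompactSupport κ)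
    (hκnonneg : ∀ x, 0 ≤ κ x) (hκint : ∫ x, κ x = 1) :
    ∃ c : ℝ, 0 < c ∧ ∀ A ∈ Set.Ioo (0:ℝ) 1, ∀ α ∈ Set.Ioo (0:ℝ) 1,
      ∀ a : ℕ → ℝ, Summable (fun k => a k ^ 2) →
        (∑' k : ℕ, a k ^ 2
            = ∫ y : EuclideanSpace ℝ (Fin d), (mollifier d κ α y) ^ 2) →
        ∀ x : EuclideanSpace ℝ (Fin d), x ≠ 0 →
          Qvar d f κ A α a x ≤ c * α ^ (-(d:ℝ) - 2) := by
  classical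
  set Cκ₀ : ℝ := ∫ y, (κ y) ^ 2 with hCκ₀
  set Cκ' : ℝ := ∑ i : Fin d, ∫ y, (fderiv ℝ κ y (EuclideanSpace.single i 1)) ^ 2 with hCκ'
  have hCκ₀nn : 0 ≤ Cκ₀ := integral_nonneg fun y => sq_nonneg _
  have hCκ'nn : 0 ≤ Cκ' :=
    Finset.sum_nonneg fun i _ => integral_nonneg fun y => sq_nonneg _
  refine ⟨2 * Cκ' + 3 * Cκ₀ + 1, by positivity, ?_⟩
  rintro A ⟨hA0, hA1⟩ α ⟨hα0, hα1⟩ a ha hsum x hx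
  have hαd2pos : (0:ℝ) < α ^ (-(d:ℝ) - 2) := Real.rpow_pos_of_pos hα0 _
  have hηsm : ContDiff ℝ (⊤ : ℕ∞) (mollifier d κ α) := mollifier_smooth κ hκsmooth α
  have hηsupp : HasCompactSupport (mollifier d κ α) := mollifier_supp κ hκsupp hα0
  -- the translated mollifier and its partial derivatives
  set φ : EuclideanSpace ℝ (Fin d) → ℝ := fun y => mollifier d κ α (x - y) with hφ
  set ψ : Fin d → EuclideanSpace ℝ (Fin d) → ℝ :=
    fun i y => fderiv ℝ (mollifier d κ α) (x - y) (EuclideanSpace.single i 1) with hψ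
  have hφc : Continuous φ :=
    (hηsm.continuous).comp (continuous_const.sub continuous_id)
  have hφs : HasCompactSupport φ := by
    have := hηsupp.comp_homeomorph (Homeomorph.subLeft x)
    simpa [Function.comp_def] using this
  have hψc : ∀ i, Continuous (ψ i) := by
    intro i
    apply Continuous.clm_apply
    · exact (hηsm.continuous_fderiv (by simp)).comp (continuous_const.sub continuous_id)
    · exact continuous_const
  have hψs : ∀ i, HasCompactSupport (ψ i) := by
    intro i
    have h1 : HasCompactSupport (fun y => fderiv ℝ (mollifier d κ α) (x - y)) := by
      have := (hηsupp.fderiv ℝ).comp_homeomorph (Homeomorph.subLeft x)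
      simpa [Function.comp_def] using this
    have := h1.comp_left (g := fun L : EuclideanSpace ℝ (Fin d) →L[ℝ] ℝ =>
      L (EuclideanSpace.single i 1)) rfl
    simpa [Function.comp_def] using this
  -- L² norms of the translated mollifier and its derivatives
  have hφ2 : ∫ y, φ y ^ 2 = α ^ (-(d:ℝ)) * Cκ₀ := by
    simp only [hφ, mollifier, mul_pow]
    rw [integral_const_mul, integral_shift_scale (fun w => κ w ^ 2) x hα0, ← mul_assoc,
      rpow1 hα0]
  have hψ2 : ∀ i, ∫ y, ψ i y ^ 2
      = α ^ (-(d:ℝ) - 2) * ∫ y, (fderiv ℝ κ y (EuclideanSpace.single i 1)) ^ 2 := by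
    intro i
    simp only [hψ]
    have : ∀ y, fderiv ℝ (mollifier d κ α) (x - y) (EuclideanSpace.single i 1)
        = α ^ (-(d:ℝ)) * α⁻¹ * fderiv ℝ κ (α⁻¹ • (x - y)) (EuclideanSpace.single i 1) :=
      fun y => mollifier_fderiv κ hκsmooth hα0 (x - y) (EuclideanSpace.single i 1)
    simp only [this, mul_pow]
    rw [integral_const_mul,
      integral_shift_scale (fun w => (fderiv ℝ κ w (EuclideanSpace.single i 1)) ^ 2) x hα0,
      ← mul_assoc, rpow2 hα0]
  -- the sum of squared coefficients
  have hsum' : ∑' k : ℕ, a k ^ 2 = α ^ (-(d:ℝ)) * Cκ₀ := by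
    rw [hsum]
    simp only [mollifier, mul_pow]
    rw [integral_const_mul,
      MeasureTheory.Measure.integral_comp_inv_smul_of_nonneg volume
        (fun w => κ w ^ 2) hα0.le]
    simp only [finrank_euclideanSpace_fin, smul_eq_mul]
    rw [← mul_assoc, rpow1 hα0]
  -- the Gaussian factor
  have hGval : ∀ z : EuclideanSpace ℝ (Fin d), |Real.exp (-A * ‖z‖ ^ 2 / 2)| ≤ 1 := by
    intro z
    rw [abs_of_pos (Real.exp_pos _)]
    apply Real.exp_le_one_iff.mpr
    have : (0:ℝ) ≤ A * ‖z‖ ^ 2 := by positivity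
    linarith
  set DG : EuclideanSpace ℝ (Fin d) →L[ℝ] ℝ :=
    (-(A * Real.exp (-A * ‖x‖ ^ 2 / 2))) • innerSL ℝ x with hDG
  have hDGnorm : ‖DG‖ ^ 2 ≤ 1 := by
    rw [hDG, norm_smul (-(A * Real.exp (-A * ‖x‖ ^ 2 / 2))) (innerSL ℝ x), innerSL_apply_norm]
    have h1 : ‖-(A * Real.exp (-A * ‖x‖ ^ 2 / 2))‖ = A * Real.exp (-A * ‖x‖ ^ 2 / 2) := by
      rw [norm_neg, Real.norm_eq_abs, abs_of_pos (by positivity)]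
    rw [h1, mul_assoc]
    have := gauss_sq_aux (nx := ‖x‖) hA0 hA1.le (norm_nonneg x)
    calc (A * (Real.exp (-A * ‖x‖ ^ 2 / 2) * ‖x‖)) ^ 2
        = (A * Real.exp (-A * ‖x‖ ^ 2 / 2) * ‖x‖) ^ 2 := by ring
      _ ≤ 1 := this
  -- bound on each summand of the first series
  have hterm : ∀ k : ℕ,
      ‖gradient (fun z => Real.exp (-A * ‖z‖ ^ 2 / 2)
          * convBasis d f (mollifier d κ α) k z) x‖ ^ 2
      ≤ 2 * (∑ i : Fin d, (∫ y, (f k : EuclideanSpace ℝ (Fin d) → ℝ) y * ψ i y) ^ 2)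
        + 2 * (∫ y, (f k : EuclideanSpace ℝ (Fin d) → ℝ) y * φ y) ^ 2 := by
    intro k
    obtain ⟨D, hD, hDv⟩ := conv_deriv f (mollifier d κ α) hηsm hηsupp k x
    have hG := gauss_hasFDeriv (d := d) A x
    have hprod : HasFDerivAt (fun z => Real.exp (-A * ‖z‖ ^ 2 / 2)
      * convBasis d f (mollifier d κ α) k z) _ x := hG.mul hD
    rw [norm_gradient_eq, hprod.fderiv]
    have hconvx : convBasis d f (mollifier d κ α) k x
        = ∫ y, (f k : EuclideanSpace ℝ (Fin d) → ℝ) y * φ y := rfl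
    have hDsq : ‖D‖ ^ 2
        = ∑ i : Fin d, (∫ y, (f k : EuclideanSpace ℝ (Fin d) → ℝ) y * ψ i y) ^ 2 := by
      rw [opnorm_sq_eq]
      exact Finset.sum_congr rfl fun i _ => by rw [hDv]
    have htri : ‖Real.exp (-A * ‖x‖ ^ 2 / 2) • D
          + convBasis d f (mollifier d κ α) k x • DG‖
        ≤ ‖D‖ + |convBasis d f (mollifier d κ α) k x| * ‖DG‖ := by
      calc ‖Real.exp (-A * ‖x‖ ^ 2 / 2) • D + convBasis d f (mollifier d κ α) k x • DG‖
          ≤ ‖Real.exp (-A * ‖x‖ ^ 2 / 2) • D‖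
            + ‖convBasis d f (mollifier d κ α) k x • DG‖ := norm_add_le _ _
        _ = |Real.exp (-A * ‖x‖ ^ 2 / 2)| * ‖D‖
            + |convBasis d f (mollifier d κ α) k x| * ‖DG‖ := by
            rw [norm_smul (Real.exp (-A * ‖x‖ ^ 2 / 2)) D,
              norm_smul (convBasis d f (mollifier d κ α) k x) DG,
              Real.norm_eq_abs, Real.norm_eq_abs]
        _ ≤ 1 * ‖D‖ + |convBasis d f (mollifier d κ α) k x| * ‖DG‖ := by
            have := hGval x
            have hD0 : (0:ℝ) ≤ ‖D‖ := norm_nonneg _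
            nlinarith
        _ = ‖D‖ + |convBasis d f (mollifier d κ α) k x| * ‖DG‖ := by ring
    have hsq : ‖Real.exp (-A * ‖x‖ ^ 2 / 2) • D
          + convBasis d f (mollifier d κ α) k x • DG‖ ^ 2
        ≤ 2 * ‖D‖ ^ 2 + 2 * (|convBasis d f (mollifier d κ α) k x| * ‖DG‖) ^ 2 := by
      have h0 : (0:ℝ) ≤ ‖Real.exp (-A * ‖x‖ ^ 2 / 2) • D
          + convBasis d f (mollifier d κ α) k x • DG‖ := norm_nonneg _
      nlinarith [htri, h0, norm_nonneg D,
        mul_nonneg (abs_nonneg (convBasis d f (mollifier d κ α) k x)) (norm_nonneg DG),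
        sq_nonneg (‖D‖ - |convBasis d f (mollifier d κ α) k x| * ‖DG‖)]
    calc ‖Real.exp (-A * ‖x‖ ^ 2 / 2) • D + convBasis d f (mollifier d κ α) k x • DG‖ ^ 2
        ≤ 2 * ‖D‖ ^ 2 + 2 * (|convBasis d f (mollifier d κ α) k x| * ‖DG‖) ^ 2 := hsq
      _ ≤ 2 * ‖D‖ ^ 2 + 2 * (convBasis d f (mollifier d κ α) k x) ^ 2 := by
          have h1 : (|convBasis d f (mollifier d κ α) k x| * ‖DG‖) ^ 2
              = (convBasis d f (mollifier d κ α) k x) ^ 2 * ‖DG‖ ^ 2 := by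
            rw [mul_pow, sq_abs]
          rw [h1]
          have h2 : (0:ℝ) ≤ (convBasis d f (mollifier d κ α) k x) ^ 2 := sq_nonneg _
          nlinarith
      _ = 2 * (∑ i : Fin d, (∫ y, (f k : EuclideanSpace ℝ (Fin d) → ℝ) y * ψ i y) ^ 2)
          + 2 * (∫ y, (f k : EuclideanSpace ℝ (Fin d) → ℝ) y * φ y) ^ 2 := by
          rw [hDsq, hconvx]
  -- sum the bound over finite sets, using Bessel's inequality
  have hpartial : ∀ s : Finset ℕ,
      ∑ k ∈ s, ‖gradient (fun z => Real.exp (-A * ‖z‖ ^ 2 / 2)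
          * convBasis d f (mollifier d κ α) k z) x‖ ^ 2
      ≤ (2 * Cκ' + 2 * Cκ₀) * α ^ (-(d:ℝ) - 2) := by
    intro s
    have h1 : ∑ k ∈ s, ‖gradient (fun z => Real.exp (-A * ‖z‖ ^ 2 / 2)
          * convBasis d f (mollifier d κ α) k z) x‖ ^ 2
        ≤ ∑ k ∈ s, (2 * (∑ i : Fin d,
            (∫ y, (f k : EuclideanSpace ℝ (Fin d) → ℝ) y * ψ i y) ^ 2)
          + 2 * (∫ y, (f k : EuclideanSpace ℝ (Fin d) → ℝ) y * φ y) ^ 2) :=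
      Finset.sum_le_sum fun k _ => hterm k
    have h2 : ∑ k ∈ s, (∫ y, (f k : EuclideanSpace ℝ (Fin d) → ℝ) y * φ y) ^ 2
        ≤ α ^ (-(d:ℝ)) * Cκ₀ := by
      rw [← hφ2]
      exact bessel_conv f φ hφc hφs s
    have h3 : ∑ k ∈ s, ∑ i : Fin d,
          (∫ y, (f k : EuclideanSpace ℝ (Fin d) → ℝ) y * ψ i y) ^ 2
        ≤ α ^ (-(d:ℝ) - 2) * Cκ' := by
      rw [Finset.sum_comm]
      have : ∀ i : Fin d, ∑ k ∈ s,
            (∫ y, (f k : EuclideanSpace ℝ (Fin d) → ℝ) y * ψ i y) ^ 2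
          ≤ α ^ (-(d:ℝ) - 2) * ∫ y, (fderiv ℝ κ y (EuclideanSpace.single i 1)) ^ 2 := by
        intro i
        rw [← hψ2 i]
        exact bessel_conv f (ψ i) (hψc i) (hψs i) s
      calc ∑ i : Fin d, ∑ k ∈ s,
            (∫ y, (f k : EuclideanSpace ℝ (Fin d) → ℝ) y * ψ i y) ^ 2
          ≤ ∑ i : Fin d, α ^ (-(d:ℝ) - 2)
              * ∫ y, (fderiv ℝ κ y (EuclideanSpace.single i 1)) ^ 2 :=
            Finset.sum_le_sum fun i _ => this i
        _ = α ^ (-(d:ℝ) - 2) * Cκ' := by rw [hCκ', Finset.mul_sum]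
    have h4 : α ^ (-(d:ℝ)) * Cκ₀ ≤ α ^ (-(d:ℝ) - 2) * Cκ₀ :=
      mul_le_mul_of_nonneg_right (rpow3 hα0 hα1.le d) hCκ₀nn
    rw [Finset.sum_add_distrib] at h1
    rw [← Finset.mul_sum, ← Finset.mul_sum] at h1
    calc ∑ k ∈ s, ‖gradient (fun z => Real.exp (-A * ‖z‖ ^ 2 / 2)
          * convBasis d f (mollifier d κ α) k z) x‖ ^ 2
        ≤ 2 * (∑ k ∈ s, ∑ i : Fin d,
              (∫ y, (f k : EuclideanSpace ℝ (Fin d) → ℝ) y * ψ i y) ^ 2)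
          + 2 * (∑ k ∈ s, (∫ y, (f k : EuclideanSpace ℝ (Fin d) → ℝ) y * φ y) ^ 2) := h1
      _ ≤ 2 * (α ^ (-(d:ℝ) - 2) * Cκ') + 2 * (α ^ (-(d:ℝ) - 2) * Cκ₀) := by
          have h5 := le_trans h2 h4
          linarith [h3, h5]
      _ = (2 * Cκ' + 2 * Cκ₀) * α ^ (-(d:ℝ) - 2) := by ring
  have hfirst : (∑' k : ℕ, ‖gradient (fun z => Real.exp (-A * ‖z‖ ^ 2 / 2)
        * convBasis d f (mollifier d κ α) k z) x‖ ^ 2)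
      ≤ (2 * Cκ' + 2 * Cκ₀) * α ^ (-(d:ℝ) - 2) :=
    tsum_le_of_sum_le' (by positivity) hpartial
  -- second term
  have hsqrt : ‖gradient (fun z : EuclideanSpace ℝ (Fin d) =>
      Real.sqrt (1 - Real.exp (-A * ‖z‖ ^ 2))) x‖ ^ 2 ≤ 1 := by
    rw [norm_gradient_eq, (sqrt_hasFDeriv A hA0 x hx).fderiv]
    rw [norm_smul (1 / (2 * Real.sqrt (1 - Real.exp (-A * ‖x‖ ^ 2))))
      ((2 * A * Real.exp (-A * ‖x‖ ^ 2)) • innerSL ℝ x),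
      norm_smul (2 * A * Real.exp (-A * ‖x‖ ^ 2)) (innerSL ℝ x), innerSL_apply_norm]
    have hxn : 0 < ‖x‖ := norm_pos_iff.mpr hx
    have hneg : -A * ‖x‖ ^ 2 < 0 := by nlinarith [mul_pos hA0 (pow_pos hxn 2)]
    have hupos : 0 < 1 - Real.exp (-A * ‖x‖ ^ 2) := by
      have := Real.exp_lt_one_iff.mpr hneg
      linarith
    have e1 : ‖(1 / (2 * Real.sqrt (1 - Real.exp (-A * ‖x‖ ^ 2))))‖
        = 1 / (2 * Real.sqrt (1 - Real.exp (-A * ‖x‖ ^ 2))) := by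
      rw [Real.norm_eq_abs, abs_of_pos]
      have := Real.sqrt_pos.mpr hupos
      positivity
    have e2 : ‖2 * A * Real.exp (-A * ‖x‖ ^ 2)‖ = 2 * A * Real.exp (-A * ‖x‖ ^ 2) := by
      rw [Real.norm_eq_abs, abs_of_pos (by positivity)]
    rw [e1, e2]
    have harg : -A * ‖x‖ ^ 2 = -(A * ‖x‖ ^ 2) := by ring
    rw [harg]
    exact sqrt_bound_aux (nx := ‖x‖) hA0 hA1.le hxn
  have hsecond : (∑' k : ℕ, a k ^ 2) * ‖gradient (fun z : EuclideanSpace ℝ (Fin d) =>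
      Real.sqrt (1 - Real.exp (-A * ‖z‖ ^ 2))) x‖ ^ 2 ≤ Cκ₀ * α ^ (-(d:ℝ) - 2) := by
    have hnn : 0 ≤ (∑' k : ℕ, a k ^ 2) := tsum_nonneg fun k => sq_nonneg _
    calc (∑' k : ℕ, a k ^ 2) * ‖gradient (fun z : EuclideanSpace ℝ (Fin d) =>
          Real.sqrt (1 - Real.exp (-A * ‖z‖ ^ 2))) x‖ ^ 2
        ≤ (∑' k : ℕ, a k ^ 2) * 1 := mul_le_mul_of_nonneg_left hsqrt hnn
      _ = α ^ (-(d:ℝ)) * Cκ₀ := by rw [mul_one, hsum']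
      _ ≤ α ^ (-(d:ℝ) - 2) * Cκ₀ :=
          mul_le_mul_of_nonneg_right (rpow3 hα0 hα1.le d) hCκ₀nn
      _ = Cκ₀ * α ^ (-(d:ℝ) - 2) := by ring
  unfold Qvar
  calc (∑' k : ℕ, ‖gradient (fun z => Real.exp (-A * ‖z‖ ^ 2 / 2)
        * convBasis d f (mollifier d κ α) k z) x‖ ^ 2)
      + (∑' k : ℕ, a k ^ 2) * ‖gradient (fun z : EuclideanSpace ℝ (Fin d) =>
          Real.sqrt (1 - Real.exp (-A * ‖z‖ ^ 2))) x‖ ^ 2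
      ≤ (2 * Cκ' + 2 * Cκ₀) * α ^ (-(d:ℝ) - 2) + Cκ₀ * α ^ (-(d:ℝ) - 2) :=
        add_le_add hfirst hsecond
    _ ≤ (2 * Cκ' + 3 * Cκ₀ + 1) * α ^ (-(d:ℝ) - 2) := by nlinarith
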